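/- Let M be a compact metric space and f : M → M a continuous surjection; equip M_f := { x : ℤ → M | f(x(n)) = x(n+1) for all n } with the subspace topology of the product topology on M^ℤ, let σ : M_f → M_f be the left shift (σx)(n) = x(n+1), and π : M_f → M, π(x) = x(0). Let ν be a σ-invariant Borel probability measure on M_f and set μ := π_*ν. Fix a real number λ with 0 < λ < 1 and a set S ⊆ M, and suppose there is a constant C > 0 such that μ({ p ∈ M : infDist(p, S) < λ^n }) ≤ C·λ^n for every n ∈ ℕ. Then for ν-almost every x ∈ M_f there exists δ > 0 such that infDist(x(−n), S) ≥ δ·λ^n for all integers n ≥ 0. -/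

import Mathlib

/-!
The sets `{x | infDist (x (-n)) S < λⁿ}` have `ν`-measure `μ {p | infDist p S < λⁿ} ≤ C λⁿ`,
because `σⁿ` preserves `ν` and `(σⁿ x) (-n) = x 0`. These bounds are summable, so by
Borel–Cantelli almost every orbit satisfies `infDist (x (-n)) S ≥ λⁿ` for all large `n`. The same
bounds force `μ {p | infDist p S = 0} = 0`, so almost surely every `infDist (x (-n)) S` is positive,
and the finitely many remaining `n` only shrink `δ`.
-/

open MeasureTheory Metric

/-- The left shift on the space of orbits of `f`. -/
def orbitShift {M : Type*} (f : M → M)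
    (x : {x : ℤ → M // ∀ n : ℤ, f (x n) = x (n + 1)}) :
    {x : ℤ → M // ∀ n : ℤ, f (x n) = x (n + 1)} :=
  ⟨fun n => x.1 (n + 1), fun n => x.2 (n + 1)⟩

open Filter

theorem exists_pos_forall_le_of_eventually_le {u : ℕ → ℝ} {c : ℝ} (hc : 0 < c)
    (hpos : ∀ n, 0 < u n) (hev : ∀ᶠ n in atTop, c ≤ u n) : ∃ δ > 0, ∀ n, δ ≤ u n := by
  obtain ⟨N, hN⟩ := eventually_atTop.1 hev
  clear hev
  induction N generalizing c with
  | zero => exact ⟨c, hc, fun n => hN n n.zero_le⟩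
  | succ N ih =>
    refine ih (lt_min hc (hpos N)) fun n hn => ?_
    obtain rfl | hn := hn.eq_or_lt
    · exact min_le_right _ _
    · exact (min_le_left _ _).trans (hN n hn)

theorem exists_pos_mul_pow_le_of_eventually {u : ℕ → ℝ} {lam : ℝ} (hlam : 0 < lam)
    (hpos : ∀ n, 0 < u n) (hev : ∀ᶠ n in atTop, lam ^ n ≤ u n) :
    ∃ δ > 0, ∀ n, δ * lam ^ n ≤ u n := by
  obtain ⟨δ, hδ, hle⟩ := exists_pos_forall_le_of_eventually_le one_pos
    (fun n => div_pos (hpos n) (pow_pos hlam n))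
    (hev.mono fun n hn => (one_le_div (pow_pos hlam n)).2 hn)
  exact ⟨δ, hδ, fun n => (le_div_iff₀ (pow_pos hlam n)).1 (hle n)⟩

theorem measure_eq_zero_of_le_ofReal_mul_pow {α : Type*} [MeasurableSpace α] {μ : Measure α}
    {s : Set α} {C lam : ℝ} (hlam0 : 0 ≤ lam) (hlam1 : lam < 1)
    (h : ∀ n : ℕ, μ s ≤ ENNReal.ofReal (C * lam ^ n)) : μ s = 0 := by
  have hlim : Tendsto (fun n : ℕ => ENNReal.ofReal (C * lam ^ n)) atTop (nhds 0) := by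
    simpa using ENNReal.tendsto_ofReal
      ((tendsto_pow_atTop_nhds_zero_of_lt_one hlam0 hlam1).const_mul C)
  exact le_antisymm (ge_of_tendsto' hlim h) zero_le

theorem tsum_ofReal_mul_pow_ne_top {C lam : ℝ} (hlam0 : 0 ≤ lam) (hlam1 : lam < 1) :
    ∑' n : ℕ, ENNReal.ofReal (C * lam ^ n) ≠ ⊤ := by
  simp_rw [ENNReal.ofReal_mul' (pow_nonneg hlam0 _), ENNReal.ofReal_pow hlam0,
    ENNReal.tsum_mul_left, ENNReal.tsum_geometric]
  exact ENNReal.mul_ne_top ENNReal.ofReal_ne_top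
    (ENNReal.inv_ne_top.2 (tsub_pos_of_lt (ENNReal.ofReal_lt_one.2 hlam1)).ne')

section IdenticallyDistributed

variable {X M : Type*} [MeasurableSpace X] [MeasurableSpace M] {ν : Measure X} {μ : Measure M}
  {φ : ℕ → X → M} {g : M → ℝ} {lam C : ℝ}

theorem ae_forall_pos_of_measure_lt_pow_le (hφ : ∀ n, Measurable (φ n))
    (hlaw : ∀ n, ν.map (φ n) = μ) (hg : Measurable g) (hlam0 : 0 < lam) (hlam1 : lam < 1)
    (hμg : ∀ n : ℕ, μ {p | g p < lam ^ n} ≤ ENNReal.ofReal (C * lam ^ n)) :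
    ∀ᵐ x ∂ν, ∀ n, 0 < g (φ n x) := by
  have hnull : μ {p | ¬ 0 < g p} = 0 := measure_eq_zero_of_le_ofReal_mul_pow hlam0.le hlam1
    fun n => (measure_mono fun p (hp : ¬ 0 < g p) =>
      (not_lt.1 hp).trans_lt (pow_pos hlam0 n)).trans (hμg n)
  refine ae_all_iff.2 fun n => (ae_map_iff (p := fun p => 0 < g p) (hφ n).aemeasurable ?_).1 ?_
  · exact measurableSet_lt measurable_const hg
  · rw [hlaw n]
    exact ae_iff.2 hnull

theorem ae_eventually_pow_le_of_measure_lt_pow_le (hφ : ∀ n, Measurable (φ n))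
    (hlaw : ∀ n, ν.map (φ n) = μ) (hg : Measurable g) (hlam0 : 0 ≤ lam) (hlam1 : lam < 1)
    (hμg : ∀ n : ℕ, μ {p | g p < lam ^ n} ≤ ENNReal.ofReal (C * lam ^ n)) :
    ∀ᵐ x ∂ν, ∀ᶠ n in atTop, lam ^ n ≤ g (φ n x) := by
  have hmeas (n : ℕ) : ν {x | g (φ n x) < lam ^ n} = μ {p | g p < lam ^ n} := by
    rw [← hlaw n, Measure.map_apply (hφ n) (measurableSet_lt hg measurable_const)]
    rfl
  have hsum : ∑' n, ν {x | g (φ n x) < lam ^ n} ≠ ⊤ := ne_top_of_le_ne_top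
    (tsum_ofReal_mul_pow_ne_top hlam0 hlam1) (ENNReal.tsum_le_tsum fun n => hmeas n ▸ hμg n)
  filter_upwards [ae_eventually_notMem hsum] with x hx
  exact hx.mono fun n hn => not_lt.1 hn

theorem ae_exists_pos_mul_pow_le_of_measure_lt_pow_le (hφ : ∀ n, Measurable (φ n))
    (hlaw : ∀ n, ν.map (φ n) = μ) (hg : Measurable g) (hlam0 : 0 < lam) (hlam1 : lam < 1)
    (hμg : ∀ n : ℕ, μ {p | g p < lam ^ n} ≤ ENNReal.ofReal (C * lam ^ n)) :
    ∀ᵐ x ∂ν, ∃ δ > 0, ∀ n, δ * lam ^ n ≤ g (φ n x) := by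
  filter_upwards [ae_forall_pos_of_measure_lt_pow_le hφ hlaw hg hlam0 hlam1 hμg,
    ae_eventually_pow_le_of_measure_lt_pow_le hφ hlaw hg hlam0.le hlam1 hμg] with x hpos hev
  exact exists_pos_mul_pow_le_of_eventually hlam0 hpos hev

end IdenticallyDistributed

section OrbitSpace

variable {M : Type*} (f : M → M)

abbrev OrbitSpace : Type _ := {x : ℤ → M // ∀ n : ℤ, f (x n) = x (n + 1)}

theorem orbitShift_iterate_apply (k : ℕ) (x : OrbitSpace f) (m : ℤ) :
    ((orbitShift f)^[k] x).1 m = x.1 (m + k) := by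
  induction k generalizing m with
  | zero => simp
  | succ k ih =>
    rw [Function.iterate_succ_apply', orbitShift, ih, Nat.cast_succ, add_assoc, add_comm 1]

variable [MeasurableSpace M]

theorem measurable_orbitSpace_apply (n : ℤ) : Measurable fun x : OrbitSpace f => x.1 n :=
  (measurable_pi_apply n).comp measurable_subtype_coe

theorem measurable_orbitShift : Measurable (orbitShift f) :=
  (measurable_pi_lambda _ fun n => measurable_orbitSpace_apply f (n + 1)).subtype_mk

theorem map_orbitSpace_apply_neg_of_map_orbitShift {ν : Measure (OrbitSpace f)}
    (hν : ν.map (orbitShift f) = ν) (n : ℕ) :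
    ν.map (fun x : OrbitSpace f => x.1 (-n)) = ν.map (fun x : OrbitSpace f => x.1 0) := by
  have hiter := (MeasurePreserving.mk (measurable_orbitShift f) hν).iterate n
  rw [← congrArg (Measure.map (fun x : OrbitSpace f => x.1 (-n))) hiter.map_eq,
    Measure.map_map (measurable_orbitSpace_apply f _) hiter.measurable]
  congr 1
  funext x
  simp [orbitShift_iterate_apply]

end OrbitSpace

theorem ae_orbit_infDist_lower_bound_general {M : Type*} [MetricSpace M]
    [MeasurableSpace M] [BorelSpace M]
    (f : M → M)
    (ν : Measure {x : ℤ → M // ∀ n : ℤ, f (x n) = x (n + 1)})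
    (hνinv : Measure.map (orbitShift f) ν = ν)
    (μ : Measure M)
    (hμ : μ = Measure.map (fun x : {x : ℤ → M // ∀ n : ℤ, f (x n) = x (n + 1)} => x.1 0) ν)
    (lam : ℝ) (hlam0 : 0 < lam) (hlam1 : lam < 1)
    (S : Set M) (C : ℝ)
    (hμS : ∀ n : ℕ, μ {p : M | infDist p S < lam ^ n} ≤ ENNReal.ofReal (C * lam ^ n)) :
    ∀ᵐ x ∂ν, ∃ δ > (0 : ℝ), ∀ n : ℕ, δ * lam ^ n ≤ infDist (x.1 (-(n : ℤ))) S := by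
  subst hμ
  exact ae_exists_pos_mul_pow_le_of_measure_lt_pow_le (g := (infDist · S))
    (φ := fun (n : ℕ) (x : OrbitSpace f) => x.1 (-n)) (fun n => measurable_orbitSpace_apply f _)
    (map_orbitSpace_apply_neg_of_map_orbitShift f hνinv) (continuous_infDist_pt S).measurable
    hlam0 hlam1 hμS

/-- let `ν` be a σ-invariant Borel probability measure on the orbit
space `M_f` with `μ := π_*ν`. If `μ {p | infDist p S < λⁿ} ≤ C·λⁿ` for all `n`,
then for `ν`-a.e. orbit `x` there is `δ > 0` with `infDist (x (-n)) S ≥ δ·λⁿ` for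
all `n ≥ 0`. -/
theorem ae_orbit_infDist_lower_bound {M : Type*} [MetricSpace M] [CompactSpace M]
    [MeasurableSpace M] [BorelSpace M]
    (f : M → M) (hf : Continuous f) (hsurj : Function.Surjective f)
    (ν : Measure {x : ℤ → M // ∀ n : ℤ, f (x n) = x (n + 1)})
    [IsProbabilityMeasure ν]
    (hνinv : Measure.map (orbitShift f) ν = ν)
    (μ : Measure M)
    (hμ : μ = Measure.map (fun x : {x : ℤ → M // ∀ n : ℤ, f (x n) = x (n + 1)} => x.1 0) ν)
    (lam : ℝ) (hlam0 : 0 < lam) (hlam1 : lam < 1)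
    (S : Set M) (C : ℝ) (hC : 0 < C)
    (hμS : ∀ n : ℕ, μ {p : M | infDist p S < lam ^ n} ≤ ENNReal.ofReal (C * lam ^ n)) :
    ∀ᵐ x ∂ν, ∃ δ > (0 : ℝ), ∀ n : ℕ, δ * lam ^ n ≤ infDist (x.1 (-(n : ℤ))) S :=
  ae_orbit_infDist_lower_bound_general f ν hνinv μ hμ lam hlam0 hlam1 S C hμS
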